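/- arXiv:1607.00050 — 5 statements merged into one kernel-verified Lean document; each statement's English description precedes it below -/
import Mathlib

section
/- Let n ≥ 2, β ∈ ℝ, and suppose A is a finite type and R : {−1,1} → A → ℝ satisfies e^{β·s·s'} = Σ_{a∈A} R(s,a)·R(s',a) for all s, s' ∈ {−1,1}. Define the vertex tensor T(a,b,c,d) = Σ_{s∈{−1,1}} R(s,a)·R(s,b)·R(s,c)·R(s,d). Then the full tensor network contraction Σ_{x : V×{1,2} → A} Π_{v∈V} T(x(v−e₁,1), x(v,1), x(v−e₂,2), x(v,2)) equals the Ising partition function Z_N(β) = Σ_{σ : V → {−1,1}} exp(−β·H_N(σ)). -/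
open Finset

/-- The spin values `{-1, 1}` as a (finite) subtype of `ℝ`. -/
abbrev Spin : Type := ({-1, 1} : Finset ℝ)

/-- Vertices of the 2D periodic `n × n` lattice. -/
abbrev V2 (n : ℕ) := ZMod n × ZMod n

/-- The 2D periodic Ising energy
`H_N(σ) = −Σ_v (σ_v σ_{v+e₁} + σ_v σ_{v+e₂})`. -/
noncomputable def H2 (n : ℕ) [NeZero n] (σ : V2 n → Spin) : ℝ :=
  -∑ v : V2 n, ((σ v : ℝ) * (σ (v + (1, 0)) : ℝ) + (σ v : ℝ) * (σ (v + (0, 1)) : ℝ))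

/-!
Expanding each vertex tensor introduces a spin `σ v` at every vertex. For a fixed spin
configuration, the bond index on the edge `(v, k)` occurs in exactly two factors, `R (σ v)` at
its tail and `R (σ (v + e_k))` at its head, so the sum over bond indices factorizes over the
edges; by the splitting hypothesis each edge contributes its Boltzmann weight `e^{β σ σ'}`.
-/

/-- Regrouping the four legs of the vertex tensors by edge: the incoming legs at `v` are the
outgoing legs at `v - e₁` and `v - e₂`. -/
theorem prod_vertexLegs_eq_prod_edgeLegs {G S A M : Type*} [AddGroup G] [Fintype G]
    [CommMonoid M] (e₁ e₂ : G) (R : S → A → M) (σ : G → S) (x : G × Fin 2 → A) :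
    ∏ v, (R (σ v) (x (v - e₁, 0)) * R (σ v) (x (v, 0)) *
        R (σ v) (x (v - e₂, 1)) * R (σ v) (x (v, 1)))
      = ∏ p : G × Fin 2, R (σ p.1) (x p) * R (σ (p.1 + ![e₁, e₂] p.2)) (x p) := by
  have shift (c : G) (k : Fin 2) :
      ∏ v, R (σ v) (x (v - c, k)) = ∏ v, R (σ (v + c)) (x (v, k)) := by
    simpa using (Equiv.prod_comp (Equiv.addRight c) fun w => R (σ w) (x (w - c, k))).symm
  simp only [Fintype.prod_prod_type, Fin.prod_univ_two, Matrix.cons_val_zero,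
    Matrix.cons_val_one, prod_mul_distrib, shift]
  ac_rfl

theorem neg_mul_H2 (n : ℕ) [NeZero n] (β : ℝ) (σ : V2 n → Spin) :
    -β * H2 n σ = ∑ p : V2 n × Fin 2,
      β * (σ p.1 : ℝ) * (σ (p.1 + ![((1, 0) : V2 n), (0, 1)] p.2) : ℝ) := by
  rw [Fintype.sum_prod_type (α₁ := V2 n), H2, neg_mul_neg, mul_sum]
  exact sum_congr rfl fun v _ => by
    simp only [Fin.sum_univ_two, Matrix.cons_val_zero, Matrix.cons_val_one]
    ring

theorem tensorNetwork_contraction_eq_partitionFunction_general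
    (n : ℕ) [NeZero n] (β : ℝ)
    (A : Type) [Fintype A] (R : Spin → A → ℝ)
    (hR : ∀ s s' : Spin, Real.exp (β * (s : ℝ) * (s' : ℝ)) = ∑ a : A, R s a * R s' a) :
    ∑ x : V2 n × Fin 2 → A, ∏ v : V2 n,
        (∑ s : Spin, R s (x (v - (1, 0), 0)) * R s (x (v, 0)) *
          R s (x (v - (0, 1), 1)) * R s (x (v, 1)))
      = ∑ σ : V2 n → Spin, Real.exp (-β * H2 n σ) := by
  calc _ = ∑ σ : V2 n → Spin, ∑ x : V2 n × Fin 2 → A, ∏ p : V2 n × Fin 2,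
          R (σ p.1) (x p) * R (σ (p.1 + ![((1, 0) : V2 n), (0, 1)] p.2)) (x p) := by
        simp_rw [Fintype.prod_sum, prod_vertexLegs_eq_prod_edgeLegs]
        exact sum_comm
    _ = ∑ σ : V2 n → Spin, ∏ p : V2 n × Fin 2,
          Real.exp (β * (σ p.1 : ℝ) * (σ (p.1 + ![((1, 0) : V2 n), (0, 1)] p.2) : ℝ)) := by
        simp_rw [hR, Fintype.prod_sum]
    _ = _ := by simp_rw [← Real.exp_sum, neg_mul_H2]

/-- If `R` splits the edge Boltzmann weight, `e^{β s s'} = Σ_a R(s,a) R(s',a)`, then the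
contraction of the tensor network built from the vertex tensors
`T(a,b,c,d) = Σ_s R(s,a) R(s,b) R(s,c) R(s,d)` over all bond-index assignments
`x : V×{1,2} → A` equals the Ising partition function `Z_N(β)`. -/
theorem tensorNetwork_contraction_eq_partitionFunction
    (n : ℕ) [NeZero n] (hn : 2 ≤ n) (β : ℝ)
    (A : Type) [Fintype A] (R : Spin → A → ℝ)
    (hR : ∀ s s' : Spin, Real.exp (β * (s : ℝ) * (s' : ℝ)) = ∑ a : A, R s a * R s' a) :
    ∑ x : V2 n × Fin 2 → A, ∏ v : V2 n,
        (∑ s : Spin, R s (x (v - (1, 0), 0)) * R s (x (v, 0)) *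
          R s (x (v - (0, 1), 1)) * R s (x (v, 1)))
      = ∑ σ : V2 n → Spin, Real.exp (-β * H2 n σ) :=
  tensorNetwork_contraction_eq_partitionFunction_general n β A R hR
end

section
/- Let n ≥ 2, β ∈ ℝ, and suppose A is a finite type and R : {−1,1} → A → ℝ satisfies e^{β·s·s'} = Σ_{a∈A} R(s,a)·R(s',a) for all s, s' ∈ {−1,1}. Define T(a,b,c,d) = Σ_{s∈{−1,1}} R(s,a)·R(s,b)·R(s,c)·R(s,d) and the impurity tensor T̃(a,b,c,d) = Σ_{s∈{−1,1}} s·R(s,a)·R(s,b)·R(s,c)·R(s,d). Then for any fixed site w ∈ V, the contraction of the network that places T̃ at vertex w and T at every other vertex equals the unnormalized magnetization: Σ_{x : V×{1,2} → A} T̃(x(w−e₁,1), x(w,1), x(w−e₂,2), x(w,2)) · Π_{v≠w} T(x(v−e₁,1), x(v,1), x(v−e₂,2), x(v,2)) = Σ_{σ : V → {−1,1}} σ_w·exp(−β·H_N(σ)). -/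
open Finset

/-- The vertex tensor `T(a,b,c,d) = Σ_s R(s,a) R(s,b) R(s,c) R(s,d)`. -/
noncomputable def Tv (A : Type) [Fintype A] (R : Spin → A → ℝ) (a b c d : A) : ℝ :=
  ∑ s : Spin, R s a * R s b * R s c * R s d

/-- The impurity tensor `T̃(a,b,c,d) = Σ_s s · R(s,a) R(s,b) R(s,c) R(s,d)`. -/
noncomputable def Timp (A : Type) [Fintype A] (R : Spin → A → ℝ) (a b c d : A) : ℝ :=
  ∑ s : Spin, (s : ℝ) * (R s a * R s b * R s c * R s d)

/-!
Expand every vertex tensor as a sum over a spin at that vertex; the impurity contributes the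
extra factor `s`. Exchanging the sums, the network becomes `Σ_σ σ_w Σ_x Π_v (vertex weights)`.
Each bond variable `x(v,k)` occurs in exactly two factors, `R(σ_v, ·)` and `R(σ_{v+e_k}, ·)`, so
the sum over `x` factorizes over bonds, and by the decomposition `e^{β s s'} = Σ_a R(s,a) R(s',a)`
each bond contributes its Boltzmann weight.
-/

theorem Fintype.sum_pi_mul_prod_eq_mul_prod_erase {V S R : Type*} [Fintype V] [DecidableEq V]
    [Fintype S] [CommSemiring R] (f : V → S → R) (g : S → R) (w : V) :
    ∑ σ : V → S, g (σ w) * ∏ v, f v (σ v)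
      = (∑ s, g s * f w s) * ∏ v ∈ univ.erase w, ∑ s, f v s := by
  have hprod : ∏ v, ∑ s, (if v = w then g s else 1) * f v s
      = (∑ s, g s * f w s) * ∏ v ∈ univ.erase w, ∑ s, f v s := by
    rw [← mul_prod_erase univ _ (mem_univ w)]
    simp only [if_true]
    congr 1
    refine Finset.prod_congr rfl fun v hv => ?_
    simp [ne_of_mem_erase hv]
  rw [← hprod, Fintype.prod_sum]
  refine Fintype.sum_congr _ _ fun σ => ?_
  rw [prod_mul_distrib, Fintype.prod_ite_eq' w (fun v => g (σ v))]

section Torus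

variable {n : ℕ} [NeZero n] {A : Type}

/-- `e₁` and `e₂`: the bond `(v, k)` joins `v` to `v + unitShift k`. -/
def unitShift (n : ℕ) : Fin 2 → V2 n := ![(1, 0), (0, 1)]

lemma H2_eq_neg_sum_bonds (σ : V2 n → Spin) :
    H2 n σ = -∑ p : V2 n × Fin 2, (σ p.1 : ℝ) * σ (p.1 + unitShift n p.2) := by
  simp [H2, Fintype.sum_prod_type, Fin.sum_univ_two, unitShift]

lemma exp_neg_mul_H2_eq_prod_bonds (β : ℝ) (σ : V2 n → Spin) :
    Real.exp (-β * H2 n σ)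
      = ∏ p : V2 n × Fin 2, Real.exp (β * σ p.1 * σ (p.1 + unitShift n p.2)) := by
  rw [H2_eq_neg_sum_bonds, ← Real.exp_sum, neg_mul_neg, mul_sum]
  simp only [mul_assoc]

/-- The four factors `R(σ_v, ·)` that the spin expansion of the tensor at `v` attaches to
the bonds incident to `v`. -/
noncomputable def siteWeight (R : Spin → A → ℝ) (σ : V2 n → Spin) (x : V2 n × Fin 2 → A)
    (v : V2 n) : ℝ :=
  R (σ v) (x (v - (1, 0), 0)) * R (σ v) (x (v, 0)) *
    R (σ v) (x (v - (0, 1), 1)) * R (σ v) (x (v, 1))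

noncomputable def bondWeight (R : Spin → A → ℝ) (σ : V2 n → Spin) (p : V2 n × Fin 2)
    (a : A) : ℝ :=
  R (σ p.1) a * R (σ (p.1 + unitShift n p.2)) a

lemma prod_R_sub_eq_prod_R_add (R : Spin → A → ℝ) (σ : V2 n → Spin) (x : V2 n × Fin 2 → A)
    (e : V2 n) (k : Fin 2) :
    ∏ v, R (σ v) (x (v - e, k)) = ∏ v, R (σ (v + e)) (x (v, k)) :=
  Fintype.prod_equiv (Equiv.subRight e) _ _ fun v => by simp

lemma prod_siteWeight_eq_prod_bondWeight (R : Spin → A → ℝ) (σ : V2 n → Spin)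
    (x : V2 n × Fin 2 → A) :
    ∏ v, siteWeight R σ x v = ∏ p, bondWeight R σ p (x p) := by
  rw [Fintype.prod_prod_type (f := fun p : V2 n × Fin 2 => bondWeight R σ p (x p))]
  simp only [siteWeight, bondWeight, Fin.prod_univ_two, prod_mul_distrib, unitShift,
    Fin.isValue, Matrix.cons_val_zero, Matrix.cons_val_one, prod_R_sub_eq_prod_R_add]
  ring

lemma sum_prod_siteWeight_eq_exp [Fintype A] (β : ℝ) (R : Spin → A → ℝ)
    (hR : ∀ s s' : Spin, Real.exp (β * (s : ℝ) * (s' : ℝ)) = ∑ a : A, R s a * R s' a)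
    (σ : V2 n → Spin) :
    ∑ x : V2 n × Fin 2 → A, ∏ v, siteWeight R σ x v = Real.exp (-β * H2 n σ) := by
  calc ∑ x : V2 n × Fin 2 → A, ∏ v, siteWeight R σ x v
      = ∑ x : V2 n × Fin 2 → A, ∏ p, bondWeight R σ p (x p) := by
        simp only [prod_siteWeight_eq_prod_bondWeight]
    _ = ∏ p : V2 n × Fin 2, ∑ a, bondWeight R σ p a := (Fintype.prod_sum _).symm
    _ = Real.exp (-β * H2 n σ) := by
        rw [exp_neg_mul_H2_eq_prod_bonds]
        exact prod_congr rfl fun p _ => (hR _ _).symm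

lemma impurity_summand_eq_sum_spins [Fintype A] (R : Spin → A → ℝ) (w : V2 n)
    (x : V2 n × Fin 2 → A) :
    Timp A R (x (w - (1, 0), 0)) (x (w, 0)) (x (w - (0, 1), 1)) (x (w, 1)) *
        ∏ v ∈ univ.erase w, Tv A R (x (v - (1, 0), 0)) (x (v, 0)) (x (v - (0, 1), 1)) (x (v, 1))
      = ∑ σ : V2 n → Spin, (σ w : ℝ) * ∏ v, siteWeight R σ x v :=
  (Fintype.sum_pi_mul_prod_eq_mul_prod_erase
    (fun v s => R s (x (v - (1, 0), 0)) * R s (x (v, 0)) *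
      R s (x (v - (0, 1), 1)) * R s (x (v, 1)))
    (fun s => (s : ℝ)) w).symm

end Torus

theorem impurity_network_eq_unnormalized_magnetization_general
    (n : ℕ) [NeZero n] (β : ℝ)
    (A : Type) [Fintype A] (R : Spin → A → ℝ)
    (hR : ∀ s s' : Spin, Real.exp (β * (s : ℝ) * (s' : ℝ)) = ∑ a : A, R s a * R s' a)
    (w : V2 n) :
    ∑ x : V2 n × Fin 2 → A,
        Timp A R (x (w - (1, 0), 0)) (x (w, 0)) (x (w - (0, 1), 1)) (x (w, 1)) *
        ∏ v ∈ Finset.univ.erase w,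
          Tv A R (x (v - (1, 0), 0)) (x (v, 0)) (x (v - (0, 1), 1)) (x (v, 1))
      = ∑ σ : V2 n → Spin, (σ w : ℝ) * Real.exp (-β * H2 n σ) := by
  simp only [impurity_summand_eq_sum_spins]
  rw [sum_comm]
  refine sum_congr rfl fun σ _ => ?_
  rw [← mul_sum, sum_prod_siteWeight_eq_exp β R hR σ]

/-- Impurity tensor method for the single-site magnetization: placing the impurity
tensor `T̃` at the site `w` and the vertex tensor `T` everywhere else, the network
contraction equals the unnormalized magnetization `Σ_σ σ_w e^{−β H_N(σ)}`. -/
theorem impurity_network_eq_unnormalized_magnetization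
    (n : ℕ) [NeZero n] (hn : 2 ≤ n) (β : ℝ)
    (A : Type) [Fintype A] (R : Spin → A → ℝ)
    (hR : ∀ s s' : Spin, Real.exp (β * (s : ℝ) * (s' : ℝ)) = ∑ a : A, R s a * R s' a)
    (w : V2 n) :
    ∑ x : V2 n × Fin 2 → A,
        Timp A R (x (w - (1, 0), 0)) (x (w, 0)) (x (w - (0, 1), 1)) (x (w, 1)) *
        ∏ v ∈ Finset.univ.erase w,
          Tv A R (x (v - (1, 0), 0)) (x (v, 0)) (x (v - (0, 1), 1)) (x (v, 1))
      = ∑ σ : V2 n → Spin, (σ w : ℝ) * Real.exp (-β * H2 n σ) :=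
  impurity_network_eq_unnormalized_magnetization_general n β A R hR w
end

section
/- Let n ≥ 2, β ∈ ℝ, and suppose A is a finite type and R : {−1,1} → A → ℝ satisfies e^{β·s·s'} = Σ_{a∈A} R(s,a)·R(s',a) for all s, s' ∈ {−1,1}. Define T(a,b,c,d) = Σ_{s∈{−1,1}} R(s,a)·R(s,b)·R(s,c)·R(s,d) and the impurity tensor T̃(a,b,c,d) = Σ_{s∈{−1,1}} s·R(s,a)·R(s,b)·R(s,c)·R(s,d). Then for any fixed site w ∈ V, the contraction of the network that places T̃ at the two adjacent vertices w and w+e₁ and T at every other vertex equals the unnormalized edge correlation: Σ_{x : V×{1,2} → A} Π_{v ∈ {w, w+e₁}} T̃(x(v−e₁,1), x(v,1), x(v−e₂,2), x(v,2)) · Π_{v ∉ {w, w+e₁}} T(x(v−e₁,1), x(v,1), x(v−e₂,2), x(v,2)) = Σ_{σ : V → {−1,1}} σ_w·σ_{w+e₁}·exp(−β·H_N(σ)). -/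
/-!
Expanding every vertex tensor as a sum over a spin `s` at its vertex turns the network into a
sum over spin configurations `σ`. For fixed `σ` the sum over bond indices factorizes over edges,
and the edge `(v, k)` contributes `Σ_a R(σ_v, a) R(σ_{v+e_k}, a) = exp (β σ_v σ_{v+e_k})`,
whose product is the Boltzmann weight. The impurity factors `s` contribute `σ_w σ_{w+e₁}`, as
the two impurity sites are distinct for `n ≥ 2`.
-/

open Finset

theorem Finset.prod_sum_mul_prod_sdiff_sum {ι κ R : Type*} [Fintype ι] [DecidableEq ι]
    [Fintype κ] [CommSemiring R] (S : Finset ι) (g f : ι → κ → R) :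
    (∏ i ∈ S, ∑ k, g i k * f i k) * ∏ i ∈ univ \ S, ∑ k, f i k
      = ∑ σ : ι → κ, (∏ i ∈ S, g i (σ i)) * ∏ i, f i (σ i) := by
  have sum_ite_mul (i : ι) : ∑ k, (if i ∈ S then g i k else 1) * f i k
      = if i ∈ S then ∑ k, g i k * f i k else ∑ k, f i k := by
    split_ifs <;> simp
  calc _ = ∏ i, ∑ k, (if i ∈ S then g i k else 1) * f i k := by
          rw [Fintype.prod_congr _ _ sum_ite_mul, prod_ite, filter_not, filter_mem_eq_inter,
            univ_inter]
    _ = _ := by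
          simp only [Fintype.prod_sum, prod_mul_distrib, prod_ite_mem, univ_inter]

theorem V2.self_ne_add_one_zero {n : ℕ} (hn : 2 ≤ n) (w : V2 n) : w ≠ w + (1, 0) := by
  have : Fact (1 < n) := ⟨hn⟩
  intro h
  exact one_ne_zero (congrArg Prod.fst (left_eq_add.mp h))

section Torus

variable {n : ℕ} [NeZero n]

def unitVec (k : Fin 2) : V2 n := if k = 0 then (1, 0) else (0, 1)

variable {X A M : Type*} [CommMonoid M]

def vertexWeight (R : X → A → M) (x : V2 n × Fin 2 → A) (s : X) (v : V2 n) : M :=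
  R s (x (v - (1, 0), 0)) * R s (x (v, 0)) * R s (x (v - (0, 1), 1)) * R s (x (v, 1))

theorem prod_vertexWeight_eq_prod_edge (R : X → A → M) (x : V2 n × Fin 2 → A)
    (σ : V2 n → X) :
    ∏ v, vertexWeight R x (σ v) v
      = ∏ e : V2 n × Fin 2, R (σ e.1) (x e) * R (σ (e.1 + unitVec e.2)) (x e) := by
  have shift (c : V2 n) (k : Fin 2) :
      ∏ v, R (σ (v + c)) (x (v, k)) = ∏ v, R (σ v) (x (v - c, k)) :=
    Fintype.prod_equiv (Equiv.addRight c) _ _ fun v => by simp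
  rw [Fintype.prod_prod_type (α₂ := Fin 2)]
  simp only [Fin.prod_univ_two, unitVec, Fin.isValue, ↓reduceIte, one_ne_zero, prod_mul_distrib]
  rw [shift, shift]
  simp only [vertexWeight, prod_mul_distrib]
  ac_rfl

theorem exp_neg_mul_H2 (β : ℝ) (σ : V2 n → Spin) :
    Real.exp (-β * H2 n σ)
      = ∏ e : V2 n × Fin 2, Real.exp (β * σ e.1 * σ (e.1 + unitVec e.2)) := by
  rw [← Real.exp_sum, Fintype.sum_prod_type, H2, neg_mul_neg, mul_sum]
  simp only [Fin.sum_univ_two, unitVec, Fin.isValue, ↓reduceIte, one_ne_zero, mul_add, mul_assoc]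

theorem sum_prod_vertexWeight_eq_exp {β : ℝ} {R : Spin → A → ℝ} [Fintype A]
    (hR : ∀ s s' : Spin, Real.exp (β * s * s') = ∑ a, R s a * R s' a) (σ : V2 n → Spin) :
    ∑ x : V2 n × Fin 2 → A, ∏ v, vertexWeight R x (σ v) v = Real.exp (-β * H2 n σ) := by
  simp only [prod_vertexWeight_eq_prod_edge, exp_neg_mul_H2, hR, Fintype.prod_sum]

end Torus

/-- Impurity tensor method for the nearest-neighbor correlation: placing the impurity
tensor `T̃` at the two adjacent sites `w` and `w + e₁` and the vertex tensor `T`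
everywhere else, the network contraction equals the unnormalized edge correlation
`Σ_σ σ_w σ_{w+e₁} e^{−β H_N(σ)}`. -/
theorem impurity_network_eq_unnormalized_correlation
    (n : ℕ) [NeZero n] (hn : 2 ≤ n) (β : ℝ)
    (A : Type) [Fintype A] (R : Spin → A → ℝ)
    (hR : ∀ s s' : Spin, Real.exp (β * (s : ℝ) * (s' : ℝ)) = ∑ a : A, R s a * R s' a)
    (w : V2 n) :
    ∑ x : V2 n × Fin 2 → A,
        (∏ v ∈ ({w, w + (1, 0)} : Finset (V2 n)),
          Timp A R (x (v - (1, 0), 0)) (x (v, 0)) (x (v - (0, 1), 1)) (x (v, 1))) *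
        ∏ v ∈ Finset.univ \ ({w, w + (1, 0)} : Finset (V2 n)),
          Tv A R (x (v - (1, 0), 0)) (x (v, 0)) (x (v - (0, 1), 1)) (x (v, 1))
      = ∑ σ : V2 n → Spin, (σ w : ℝ) * (σ (w + (1, 0)) : ℝ) * Real.exp (-β * H2 n σ) := by
  calc _ = ∑ x : V2 n × Fin 2 → A,
          (∏ v ∈ {w, w + (1, 0)}, ∑ s : Spin, (s : ℝ) * vertexWeight R x s v) *
            ∏ v ∈ univ \ {w, w + (1, 0)}, ∑ s : Spin, vertexWeight R x s v := rfl
    _ = ∑ σ : V2 n → Spin, (∏ v ∈ {w, w + (1, 0)}, (σ v : ℝ)) *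
          ∑ x : V2 n × Fin 2 → A, ∏ v, vertexWeight R x (σ v) v := by
      simp only [prod_sum_mul_prod_sdiff_sum, mul_sum]
      exact sum_comm
    _ = _ := by
      simp only [sum_prod_vertexWeight_eq_exp hR, prod_pair (V2.self_ne_add_one_zero hn w)]
end

section
/- Let n ≥ 2, β, B ∈ ℝ, and suppose A is a finite type and R : {−1,1} → A → ℝ satisfies e^{β·s·s'} = Σ_{a∈A} R(s,a)·R(s',a) for all s, s' ∈ {−1,1}. Define the field-dressed vertex tensor T_B(a,b,c,d) = Σ_{s∈{−1,1}} e^{β·B·s}·R(s,a)·R(s,b)·R(s,c)·R(s,d). Then Σ_{x : V×{1,2} → A} Π_{v∈V} T_B(x(v−e₁,1), x(v,1), x(v−e₂,2), x(v,2)) = Z_{N,B}(β), the partition function of the periodic Ising model with external field B. -/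
/-!
Expanding every vertex tensor as a sum over a spin at that vertex turns the contraction into a
sum over spin configurations `σ`. For fixed `σ`, each bond index appears in exactly the two
tensors at the endpoints of its edge, so the sum over bond assignments factors over edges into
`∑ a, R (σ u) a * R (σ w) a = exp (β σ_u σ_w)`, which together with the field weights
`exp (β B σ_v)` is the Boltzmann weight `exp (-β H_{N,B}(σ))`.
-/

open Finset

/-- The perturbed 2D periodic Ising energy with external field `B`:
`H_{N,B}(σ) = −(Σ_v (σ_v σ_{v+e₁} + σ_v σ_{v+e₂}) + B Σ_v σ_v)`. -/
noncomputable def H2B (n : ℕ) [NeZero n] (B : ℝ) (σ : V2 n → Spin) : ℝ :=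
  -((∑ v : V2 n, ((σ v : ℝ) * (σ (v + (1, 0)) : ℝ) + (σ v : ℝ) * (σ (v + (0, 1)) : ℝ)))
    + B * ∑ v : V2 n, (σ v : ℝ))

/-- The field-dressed vertex tensor
`T_B(a,b,c,d) = Σ_s e^{β B s} R(s,a) R(s,b) R(s,c) R(s,d)`. -/
noncomputable def TvB (A : Type) [Fintype A] (β B : ℝ) (R : Spin → A → ℝ)
    (a b c d : A) : ℝ :=
  ∑ s : Spin, Real.exp (β * B * (s : ℝ)) * (R s a * R s b * R s c * R s d)

/-- `torusStep n k` is the unit translation `e_{k+1}`; edge `(v, k)` joins `v` to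
`v + torusStep n k`. -/
def torusStep (n : ℕ) : Fin 2 → V2 n := ![(1, 0), (0, 1)]

lemma prod_torus_vertex_eq_prod_edge {M : Type*} [CommMonoid M] (n : ℕ) [NeZero n]
    (h : V2 n → V2 n × Fin 2 → M) :
    ∏ v : V2 n, h v (v - (1, 0), 0) * h v (v, 0) * h v (v - (0, 1), 1) * h v (v, 1)
      = ∏ e : V2 n × Fin 2, h e.1 e * h (e.1 + torusStep n e.2) e := by
  have shift (k : Fin 2) : ∏ v : V2 n, h v (v - torusStep n k, k)
      = ∏ v : V2 n, h (v + torusStep n k) (v, k) :=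
    (Equiv.prod_comp (Equiv.addRight (torusStep n k)) _).symm.trans (by simp)
  rw [Fintype.prod_prod_type (α₂ := Fin 2)]
  simp only [Fin.prod_univ_two, prod_mul_distrib, ← shift]
  simp only [torusStep, Matrix.cons_val_zero, Matrix.cons_val_one]
  ac_rfl

lemma exp_neg_mul_H2B (n : ℕ) [NeZero n] (β B : ℝ) (σ : V2 n → Spin) :
    Real.exp (-β * H2B n B σ)
      = (∏ v : V2 n, Real.exp (β * B * σ v))
        * ∏ e : V2 n × Fin 2, Real.exp (β * σ e.1 * σ (e.1 + torusStep n e.2)) := by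
  rw [← Real.exp_sum, ← Real.exp_sum, ← Real.exp_add, Fintype.sum_prod_type (α₂ := Fin 2),
    ← sum_add_distrib, H2B]
  congr 1
  simp only [Fin.sum_univ_two, torusStep, Matrix.cons_val_zero, Matrix.cons_val_one, neg_mul_neg,
    mul_add, mul_sum, ← sum_add_distrib]
  exact sum_congr rfl fun v _ => by ring

lemma sum_prod_pinned_vertex_tensor {S A 𝕜 : Type*} [Fintype A] [CommSemiring 𝕜]
    (n : ℕ) [NeZero n] (w : S → 𝕜) (R : S → A → 𝕜) (σ : V2 n → S) :
    ∑ x : V2 n × Fin 2 → A, ∏ v : V2 n, w (σ v) * (R (σ v) (x (v - (1, 0), 0))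
        * R (σ v) (x (v, 0)) * R (σ v) (x (v - (0, 1), 1)) * R (σ v) (x (v, 1)))
      = (∏ v : V2 n, w (σ v))
        * ∏ e : V2 n × Fin 2, ∑ a : A, R (σ e.1) a * R (σ (e.1 + torusStep n e.2)) a := by
  conv_lhs =>
    enter [2, x]
    rw [prod_mul_distrib, prod_torus_vertex_eq_prod_edge n fun v e => R (σ v) (x e)]
  rw [← mul_sum, Fintype.prod_sum]

theorem field_network_eq_perturbed_partitionFunction_general
    (n : ℕ) [NeZero n] (β B : ℝ)
    (A : Type) [Fintype A] (R : Spin → A → ℝ)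
    (hR : ∀ s s' : Spin, Real.exp (β * (s : ℝ) * (s' : ℝ)) = ∑ a : A, R s a * R s' a) :
    ∑ x : V2 n × Fin 2 → A, ∏ v : V2 n,
        TvB A β B R (x (v - (1, 0), 0)) (x (v, 0)) (x (v - (0, 1), 1)) (x (v, 1))
      = ∑ σ : V2 n → Spin, Real.exp (-β * H2B n B σ) := by
  calc
    _ = ∑ x : V2 n × Fin 2 → A, ∑ σ : V2 n → Spin, ∏ v : V2 n,
          Real.exp (β * B * σ v) * (R (σ v) (x (v - (1, 0), 0)) * R (σ v) (x (v, 0))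
            * R (σ v) (x (v - (0, 1), 1)) * R (σ v) (x (v, 1))) := by
      simp only [TvB, Fintype.prod_sum]
    _ = ∑ σ : V2 n → Spin, Real.exp (-β * H2B n B σ) := by
      rw [sum_comm]
      refine sum_congr rfl fun σ _ => ?_
      rw [sum_prod_pinned_vertex_tensor n (fun s : Spin => Real.exp (β * B * s)) R σ,
        exp_neg_mul_H2B]
      simp only [hR]

/-- The tensor network built from field-dressed vertex tensors contracts to the
partition function `Z_{N,B}(β)` of the periodic Ising model with external field `B`. -/
theorem field_network_eq_perturbed_partitionFunction
    (n : ℕ) [NeZero n] (hn : 2 ≤ n) (β B : ℝ)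
    (A : Type) [Fintype A] (R : Spin → A → ℝ)
    (hR : ∀ s s' : Spin, Real.exp (β * (s : ℝ) * (s' : ℝ)) = ∑ a : A, R s a * R s' a) :
    ∑ x : V2 n × Fin 2 → A, ∏ v : V2 n,
        TvB A β B R (x (v - (1, 0), 0)) (x (v, 0)) (x (v - (0, 1), 1)) (x (v, 1))
      = ∑ σ : V2 n → Spin, Real.exp (-β * H2B n B σ) :=
  field_network_eq_perturbed_partitionFunction_general n β B A R hR
end

section
/- Let n ≥ 2, β ∈ ℝ, and suppose A is a finite type and R : {−1,1} → A → ℝ satisfies e^{β·s·s'} = Σ_{a∈A} R(s,a)·R(s',a) for all s, s' ∈ {−1,1}. Define the 6-leg vertex tensor T(a,b,c,d,e,f) = Σ_{s∈{−1,1}} R(s,a)·R(s,b)·R(s,c)·R(s,d)·R(s,e)·R(s,f). Then the contraction Σ_{x : V×{1,2,3} → A} Π_{v∈V} T(x(v−e₁,1), x(v,1), x(v−e₂,2), x(v,2), x(v−e₃,3), x(v,3)) equals the 3D Ising partition function Z_N(β) = Σ_{σ : V → {−1,1}} exp(−β·H_N(σ)). -/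
open Finset

/-- Vertices of the 3D periodic `n × n × n` lattice. -/
abbrev V3 (n : ℕ) := ZMod n × ZMod n × ZMod n

/-- The 3D periodic Ising energy
`H_N(σ) = −Σ_v (σ_v σ_{v+e₁} + σ_v σ_{v+e₂} + σ_v σ_{v+e₃})`. -/
noncomputable def H3 (n : ℕ) [NeZero n] (σ : V3 n → Spin) : ℝ :=
  -∑ v : V3 n, ((σ v : ℝ) * (σ (v + (1, 0, 0)) : ℝ) + (σ v : ℝ) * (σ (v + (0, 1, 0)) : ℝ)
    + (σ v : ℝ) * (σ (v + (0, 0, 1)) : ℝ))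

/-- The 6-leg vertex tensor
`T(a,b,c,d,e,f) = Σ_s R(s,a) R(s,b) R(s,c) R(s,d) R(s,e) R(s,f)`. -/
noncomputable def Tv6 (A : Type) [Fintype A] (R : Spin → A → ℝ) (a b c d e f : A) : ℝ :=
  ∑ s : Spin, R s a * R s b * R s c * R s d * R s e * R s f

/-
Write each edge weight as `e^{β s s'} = Σ_a R(s,a) R(s',a)`. Expanding the partition function, each
edge `(v,k)` carries a summation index `x(v,k)`, and after exchanging the sums over spins and over
bond indices, the factors attached to a vertex `v` are the two legs of each of its three incoming
and three outgoing edges. Summing out `σ_v` vertex by vertex produces the tensor `T` at `v`.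
-/

section TranslationInvariantNetwork

variable {V K S A M : Type*} [AddCommGroup V] [Fintype V] [Fintype K]

lemma prod_legs_eq_prod_edges [CommMonoid M] (e : K → V) (g : S → A → M) (σ : V → S)
    (x : V × K → A) :
    ∏ v, ∏ k, g (σ v) (x (v, k)) * g (σ v) (x (v - e k, k))
      = ∏ p : V × K, g (σ p.1) (x p) * g (σ (p.1 + e p.2)) (x p) := by
  have incoming (k : K) : ∏ v, g (σ v) (x (v - e k, k)) = ∏ v, g (σ (v + e k)) (x (v, k)) :=
    (Fintype.prod_equiv (Equiv.addRight (e k)) _ _ fun v => by simp).symm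
  simp only [Fintype.prod_prod_type, Finset.prod_mul_distrib]
  rw [Finset.prod_comm (f := fun v k => g (σ v) (x (v - e k, k))),
    Finset.prod_comm (f := fun v k => g (σ (v + e k)) (x (v, k)))]
  simp only [incoming]

variable [DecidableEq V] [DecidableEq K] [Fintype S] [Fintype A]

theorem sum_prod_vertexTensor_eq_sum_prod_edgeWeight [CommSemiring M] (e : K → V)
    (R : S → A → M) :
    ∑ x : V × K → A, ∏ v, ∑ s, ∏ k, R s (x (v, k)) * R s (x (v - e k, k))
      = ∑ σ : V → S, ∏ p : V × K, ∑ a, R (σ p.1) a * R (σ (p.1 + e p.2)) a := by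
  calc
    _ = ∑ x : V × K → A, ∑ σ : V → S,
          ∏ p : V × K, R (σ p.1) (x p) * R (σ (p.1 + e p.2)) (x p) := by
      simp only [Fintype.prod_sum, prod_legs_eq_prod_edges]
    _ = _ := by
      rw [Finset.sum_comm]
      simp only [Fintype.prod_sum]

end TranslationInvariantNetwork

def unitShift3 (n : ℕ) : Fin 3 → V3 n := ![(1, 0, 0), (0, 1, 0), (0, 0, 1)]

lemma neg_mul_H3_eq_sum_edges (n : ℕ) [NeZero n] (β : ℝ) (σ : V3 n → Spin) :
    -β * H3 n σ = ∑ p : V3 n × Fin 3, β * (σ p.1 : ℝ) * (σ (p.1 + unitShift3 n p.2) : ℝ) := by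
  rw [Fintype.sum_prod_type, H3, neg_mul_neg, Finset.mul_sum]
  refine Finset.sum_congr rfl fun v _ => ?_
  simp only [Fin.sum_univ_three, unitShift3, Matrix.cons_val_zero, Matrix.cons_val_one,
    Matrix.cons_val_two, Matrix.head_cons, Matrix.tail_cons]
  ring

lemma Tv6_eq_sum_prod_legs (n : ℕ) (A : Type) [Fintype A] (R : Spin → A → ℝ)
    (x : V3 n × Fin 3 → A) (v : V3 n) :
    Tv6 A R (x (v - (1, 0, 0), 0)) (x (v, 0)) (x (v - (0, 1, 0), 1)) (x (v, 1))
        (x (v - (0, 0, 1), 2)) (x (v, 2))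
      = ∑ s, ∏ k, R s (x (v, k)) * R s (x (v - unitShift3 n k, k)) := by
  refine Finset.sum_congr rfl fun s _ => ?_
  simp only [Fin.prod_univ_three, unitShift3, Matrix.cons_val_zero, Matrix.cons_val_one,
    Matrix.cons_val_two, Matrix.head_cons, Matrix.tail_cons]
  ring

theorem tensorNetwork3D_contraction_eq_partitionFunction_general
    (n : ℕ) [NeZero n] (β : ℝ)
    (A : Type) [Fintype A] (R : Spin → A → ℝ)
    (hR : ∀ s s' : Spin, Real.exp (β * (s : ℝ) * (s' : ℝ)) = ∑ a : A, R s a * R s' a) :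
    ∑ x : V3 n × Fin 3 → A, ∏ v : V3 n,
        Tv6 A R (x (v - (1, 0, 0), 0)) (x (v, 0)) (x (v - (0, 1, 0), 1)) (x (v, 1))
          (x (v - (0, 0, 1), 2)) (x (v, 2))
      = ∑ σ : V3 n → Spin, Real.exp (-β * H3 n σ) := by
  simp only [Tv6_eq_sum_prod_legs, sum_prod_vertexTensor_eq_sum_prod_edgeWeight,
    neg_mul_H3_eq_sum_edges, Real.exp_sum, hR]

/-- If `R` splits the edge Boltzmann weight, then the contraction of the 3D tensor
network built from the 6-leg vertex tensors equals the 3D Ising partition function. -/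
theorem tensorNetwork3D_contraction_eq_partitionFunction
    (n : ℕ) [NeZero n] (hn : 2 ≤ n) (β : ℝ)
    (A : Type) [Fintype A] (R : Spin → A → ℝ)
    (hR : ∀ s s' : Spin, Real.exp (β * (s : ℝ) * (s' : ℝ)) = ∑ a : A, R s a * R s' a) :
    ∑ x : V3 n × Fin 3 → A, ∏ v : V3 n,
        Tv6 A R (x (v - (1, 0, 0), 0)) (x (v, 0)) (x (v - (0, 1, 0), 1)) (x (v, 1))
          (x (v - (0, 0, 1), 2)) (x (v, 2))
      = ∑ σ : V3 n → Spin, Real.exp (-β * H3 n σ) :=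
  tensorNetwork3D_contraction_eq_partitionFunction_general n β A R hR
end
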